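/- Suppose the put price satisfies P(K) = E[(K−S)⁺] with ℙ(S = 0) = p > 0 and E[S] = S₀. For log-moneyness x < 0 with K_x = S₀e^x, write C_BS(-x, I(x)√T) = E[(1 − e^{-x}S/S₀)⁺] (put-call parity form). Then N(d₁(-x, I(x)√T)) = p + R(K_x) + e^{-x}N(d₂(-x, I(x)√T)), where R(K) = P(K)/K − p, d_{1,2}(y,σ) = -y/σ ± σ/2, and the last term φ̄(x) := e^{-x}N(d₂(-x,I(x)√T)) satisfies 0 ≤ φ̄(x) ≤ e^{|x|}N(-√(2|x|)), hence limsup_{x→-∞} φ̄(x)·√(2π)·√(2|x|) ≤ 1. -/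

import Mathlib

open MeasureTheory

noncomputable def gaussPdf (z : ℝ) : ℝ := Real.exp (-z^2/2) / Real.sqrt (2*Real.pi)
noncomputable def gaussCdf (d : ℝ) : ℝ := ∫ z in Set.Iic d, gaussPdf z
noncomputable def CBS (x σ : ℝ) : ℝ :=
  gaussCdf (-x/σ + σ/2) - Real.exp x * gaussCdf (-x/σ - σ/2)

/-!
Put–call parity `P(K) = C(K) - S₀ + K` and the symmetry `N(-d) = 1 - N(d)` turn the call-price
identity at `K = S₀ eˣ` into `P(K)/K = N(d₁) - e^{-x} N(d₂)`. For `x < 0`, AM-GM gives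
`-d₂ = |x|/σ + σ/2 ≥ √(2|x|)`, so `φ̄(x) ≤ e^{|x|} N(-√(2|x|))`, and Mills' inequality
`N(-z) ≤ φ(z)/z` at `z = √(2|x|)`, where `φ(z) = e^{-|x|}/√(2π)`, bounds the limsup by `1`.
-/

open Real Filter Set Topology

lemma gaussPdf_eq_gaussianPDFReal : gaussPdf = ProbabilityTheory.gaussianPDFReal 0 1 := by
  ext z
  simp [gaussPdf, ProbabilityTheory.gaussianPDFReal, div_eq_inv_mul]

lemma integrable_gaussPdf : Integrable gaussPdf :=
  gaussPdf_eq_gaussianPDFReal ▸ ProbabilityTheory.integrable_gaussianPDFReal 0 1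

lemma integral_gaussPdf : ∫ z, gaussPdf z = 1 :=
  gaussPdf_eq_gaussianPDFReal ▸ ProbabilityTheory.integral_gaussianPDFReal_eq_one 0 one_ne_zero

lemma gaussPdf_nonneg (z : ℝ) : 0 ≤ gaussPdf z := by
  unfold gaussPdf; positivity

lemma gaussPdf_neg (z : ℝ) : gaussPdf (-z) = gaussPdf z := by
  simp [gaussPdf]

lemma hasDerivAt_gaussPdf (u : ℝ) : HasDerivAt gaussPdf (-u * gaussPdf u) u := by
  have h : HasDerivAt (fun z : ℝ => -z ^ 2 / 2) (-u) u :=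
    ((hasDerivAt_pow 2 u).fun_neg.div_const 2).congr_deriv (by ring)
  exact (h.exp.div_const (√(2 * π))).congr_deriv (by rw [gaussPdf]; ring)

lemma tendsto_gaussPdf_atTop : Tendsto gaussPdf atTop (𝓝 0) := by
  have h : Tendsto (fun z : ℝ => -z ^ 2 / 2) atTop atBot :=
    (tendsto_neg_atTop_atBot.comp ((tendsto_pow_atTop two_ne_zero).atTop_div_const two_pos)).congr
      fun z => by simp [neg_div]
  have := (tendsto_exp_atBot.comp h).div_const (√(2 * π))
  rwa [zero_div] at this

lemma gaussCdf_nonneg (d : ℝ) : 0 ≤ gaussCdf d :=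
  setIntegral_nonneg measurableSet_Iic fun z _ => gaussPdf_nonneg z

lemma gaussCdf_mono : Monotone gaussCdf := fun _ _ h =>
  setIntegral_mono_set integrable_gaussPdf.integrableOn
    (Eventually.of_forall gaussPdf_nonneg) (Iic_subset_Iic.2 h).eventuallyLE

lemma gaussCdf_neg_eq_integral_Ioi (d : ℝ) : gaussCdf (-d) = ∫ z in Ioi d, gaussPdf z := by
  rw [gaussCdf, ← integral_comp_neg_Ioi]
  simp only [gaussPdf_neg]

lemma gaussCdf_neg (d : ℝ) : gaussCdf (-d) = 1 - gaussCdf d := by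
  rw [gaussCdf_neg_eq_integral_Ioi, gaussCdf, ← integral_gaussPdf,
    ← intervalIntegral.integral_Iic_add_Ioi integrable_gaussPdf.integrableOn
      integrable_gaussPdf.integrableOn]
  ring

/-- Mills' inequality: on `(z, ∞)` the density is dominated by `u φ(u) / z`, which integrates
to `φ(z) / z` since `-φ` is an antiderivative of `u φ(u)`. -/
lemma gaussCdf_neg_le_gaussPdf_div {z : ℝ} (hz : 0 < z) : gaussCdf (-z) ≤ gaussPdf z / z := by
  have hderiv : ∀ u ∈ Ici z, HasDerivAt (fun u => -gaussPdf u) (u * gaussPdf u) u :=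
    fun u _ => by simpa using (hasDerivAt_gaussPdf u).fun_neg
  have hpos : ∀ u ∈ Ioi z, 0 ≤ u * gaussPdf u :=
    fun u hu => mul_nonneg (hz.trans hu).le (gaussPdf_nonneg u)
  have hlim : Tendsto (fun u => -gaussPdf u) atTop (𝓝 0) := by
    simpa using tendsto_gaussPdf_atTop.neg
  have hint := integrableOn_Ioi_deriv_of_nonneg' hderiv hpos hlim
  have hmoment : ∫ u in Ioi z, u * gaussPdf u = gaussPdf z := by
    rw [integral_Ioi_of_hasDerivAt_of_nonneg' hderiv hpos hlim]; ring
  calc gaussCdf (-z) = ∫ u in Ioi z, gaussPdf u := gaussCdf_neg_eq_integral_Ioi z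
    _ ≤ ∫ u in Ioi z, u * gaussPdf u / z := by
        refine setIntegral_mono_on integrable_gaussPdf.integrableOn (hint.div_const z)
          measurableSet_Ioi fun u hu => ?_
        rw [le_div_iff₀ hz, mul_comm]
        exact mul_le_mul_of_nonneg_right hu.le (gaussPdf_nonneg u)
    _ = gaussPdf z / z := by rw [integral_div, hmoment]

lemma exp_mul_gaussCdf_neg_sqrt_le {y : ℝ} (hy : 0 < y) :
    exp y * gaussCdf (-√(2 * y)) * √(2 * π) * √(2 * y) ≤ 1 := by
  have hz : 0 < √(2 * y) := sqrt_pos.2 (by positivity)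
  have hpdf : gaussPdf √(2 * y) = exp (-y) / √(2 * π) := by
    rw [gaussPdf, sq_sqrt (by positivity)]; ring_nf
  calc exp y * gaussCdf (-√(2 * y)) * √(2 * π) * √(2 * y)
      ≤ exp y * (gaussPdf √(2 * y) / √(2 * y)) * √(2 * π) * √(2 * y) := by
        gcongr; exact gaussCdf_neg_le_gaussPdf_div hz
    _ = 1 := by
        rw [hpdf]; field_simp; rw [← exp_add]; simp

lemma limsup_mul_sqrt_le_one {f : ℝ → ℝ}
    (hf : ∀ x < (0:ℝ), 0 ≤ f x ∧ f x ≤ exp |x| * gaussCdf (-√(2 * |x|))) :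
    limsup (fun x => f x * √(2 * π) * √(2 * |x|)) atBot ≤ 1 := by
  have hle : ∀ᶠ x in atBot, f x * √(2 * π) * √(2 * |x|) ≤ 1 := by
    filter_upwards [eventually_lt_atBot 0] with x hx
    calc f x * √(2 * π) * √(2 * |x|)
        ≤ exp |x| * gaussCdf (-√(2 * |x|)) * √(2 * π) * √(2 * |x|) := by
          gcongr; exact (hf x hx).2
      _ ≤ 1 := exp_mul_gaussCdf_neg_sqrt_le (abs_pos.2 hx.ne)
  have hnonneg : ∀ᶠ x in atBot, 0 ≤ f x * √(2 * π) * √(2 * |x|) := by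
    filter_upwards [eventually_lt_atBot 0] with x hx
    have := (hf x hx).1
    positivity
  exact limsup_le_of_le (isCoboundedUnder_le_of_eventually_le _ hnonneg) hle

lemma sqrt_two_mul_le_div_add_half {y σ : ℝ} (hy : 0 ≤ y) (hσ : 0 < σ) :
    √(2 * y) ≤ y / σ + σ / 2 := by
  have hyσ : y / σ * σ = y := div_mul_cancel₀ y hσ.ne'
  rw [sqrt_le_iff]
  -- `(y/σ + σ/2)² - 2y = (y/σ - σ/2)²`
  exact ⟨by positivity, by nlinarith [sq_nonneg (y / σ - σ / 2)]⟩

lemma exp_neg_mul_gaussCdf_div_sub_half_le {x σ : ℝ} (hx : x < 0) (hσ : 0 < σ) :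
    exp (-x) * gaussCdf (x / σ - σ / 2) ≤ exp |x| * gaussCdf (-√(2 * |x|)) := by
  rw [abs_of_neg hx]
  gcongr
  apply gaussCdf_mono
  have := sqrt_two_mul_le_div_add_half (neg_nonneg.2 hx.le) hσ
  linarith [show x / σ = -(-x / σ) by ring]

lemma CBS_eq_one_sub_exp_add (x σ : ℝ) :
    CBS x σ = 1 - exp x + (exp x * gaussCdf (x / σ + σ / 2) - gaussCdf (x / σ - σ / 2)) := by
  rw [CBS, show -x / σ + σ / 2 = -(x / σ - σ / 2) by ring,
    show -x / σ - σ / 2 = -(x / σ + σ / 2) by ring, gaussCdf_neg, gaussCdf_neg]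
  ring

lemma integral_put_eq_call_sub_add {Ω : Type*} [MeasurableSpace Ω] {μ : Measure Ω}
    [IsProbabilityMeasure μ] {S : Ω → ℝ} (hS : Integrable S μ) (K : ℝ) :
    ∫ ω, max (K - S ω) 0 ∂μ = ∫ ω, max (S ω - K) 0 ∂μ - ∫ ω, S ω ∂μ + K := by
  have hsplit : (fun ω => max (K - S ω) 0) = fun ω => max (S ω - K) 0 + (K - S ω) := by
    ext ω
    rcases le_total K (S ω) with h | h
    · simp [max_eq_right (sub_nonpos.2 h), max_eq_left (sub_nonneg.2 h)]
    · simp [max_eq_left (sub_nonneg.2 h), max_eq_right (sub_nonpos.2 h)]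
  have hcall : Integrable (fun ω => max (S ω - K) 0) μ := (hS.sub (integrable_const K)).pos_part
  have hlin : Integrable (fun ω => K - S ω) μ := (integrable_const K).sub hS
  rw [hsplit, integral_add hcall hlin, integral_sub (integrable_const K) hS, integral_const]
  simp only [probReal_univ, one_smul]
  ring

theorem d1_parity_estimate_general
    {Ω : Type*} [MeasurableSpace Ω] (ℙ : Measure Ω) [IsProbabilityMeasure ℙ]
    (S : Ω → ℝ) (hint : Integrable S ℙ)
    (S₀ T p : ℝ) (hS0 : S₀ = ∫ ω, S ω ∂ℙ) (hS0pos : 0 < S₀) (hT : 0 < T)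
    (I : ℝ → ℝ) (hIpos : ∀ x < (0:ℝ), 0 < I x)
    (hI : ∀ x : ℝ, ∫ ω, max (S ω - S₀*Real.exp x) 0 ∂ℙ = S₀ * CBS x (I x * Real.sqrt T))
    (R : ℝ → ℝ) (hR : R = fun K => (∫ ω, max (K - S ω) 0 ∂ℙ) / K - p)
    (φb : ℝ → ℝ)
    (hφb : φb = fun x => Real.exp (-x) *
      gaussCdf (x/(I x * Real.sqrt T) - I x * Real.sqrt T/2)) :
    (∀ x < (0:ℝ),
      gaussCdf (x/(I x * Real.sqrt T) + I x * Real.sqrt T/2)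
        = p + R (S₀ * Real.exp x) + φb x) ∧
    (∀ x < (0:ℝ), 0 ≤ φb x ∧ φb x ≤ Real.exp |x| * gaussCdf (-Real.sqrt (2*|x|))) ∧
    Filter.limsup (fun x => φb x * Real.sqrt (2*Real.pi) * Real.sqrt (2*|x|))
      Filter.atBot ≤ 1 := by
  have hbound (x : ℝ) (hx : x < 0) :
      0 ≤ φb x ∧ φb x ≤ exp |x| * gaussCdf (-√(2 * |x|)) := by
    subst hφb
    dsimp only
    exact ⟨mul_nonneg (exp_pos _).le (gaussCdf_nonneg _),
      exp_neg_mul_gaussCdf_div_sub_half_le hx (mul_pos (hIpos x hx) (sqrt_pos.2 hT))⟩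
  refine ⟨fun x _ => ?_, hbound, limsup_mul_sqrt_le_one hbound⟩
  have hput := integral_put_eq_call_sub_add hint (S₀ * exp x)
  rw [hI, ← hS0, CBS_eq_one_sub_exp_add] at hput
  subst hR hφb
  simp only [hput, exp_neg]
  field_simp
  ring

theorem d1_parity_estimate
    {Ω : Type*} [MeasurableSpace Ω] (ℙ : Measure Ω) [IsProbabilityMeasure ℙ]
    (S : Ω → ℝ) (hS : ∀ ω, 0 ≤ S ω) (hint : Integrable S ℙ)
    (S₀ T p : ℝ) (hS0 : S₀ = ∫ ω, S ω ∂ℙ) (hS0pos : 0 < S₀) (hT : 0 < T)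
    (hp : p = (ℙ {ω | S ω = 0}).toReal) (hppos : 0 < p)
    (I : ℝ → ℝ) (hIpos : ∀ x < (0:ℝ), 0 < I x)
    (hI : ∀ x : ℝ, ∫ ω, max (S ω - S₀*Real.exp x) 0 ∂ℙ = S₀ * CBS x (I x * Real.sqrt T))
    (R : ℝ → ℝ) (hR : R = fun K => (∫ ω, max (K - S ω) 0 ∂ℙ) / K - p)
    (φb : ℝ → ℝ)
    (hφb : φb = fun x => Real.exp (-x) *
      gaussCdf (x/(I x * Real.sqrt T) - I x * Real.sqrt T/2)) :
    (∀ x < (0:ℝ),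
      gaussCdf (x/(I x * Real.sqrt T) + I x * Real.sqrt T/2)
        = p + R (S₀ * Real.exp x) + φb x) ∧
    (∀ x < (0:ℝ), 0 ≤ φb x ∧ φb x ≤ Real.exp |x| * gaussCdf (-Real.sqrt (2*|x|))) ∧
    Filter.limsup (fun x => φb x * Real.sqrt (2*Real.pi) * Real.sqrt (2*|x|))
      Filter.atBot ≤ 1 :=
  d1_parity_estimate_general ℙ S hint S₀ T p hS0 hS0pos hT I hIpos hI R hR φb hφb
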